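/- arXiv:1010.3394 — 2 statements merged into one kernel-verified Lean document; each statement's English description precedes it below -/
import Mathlib

section
/- Let l ≥ 3 and let p = (p_1,…,p_l) with integers p_1,…,p_l ≥ 2. Let 𝔅_p be the set of tuples (J_1,…,J_l) ∈ 𝔅_{n,p_1} × ⋯ × 𝔅_{n,p_l} such that (i) every element of the multiset union ⋃_{i=1}^l S_{J_i} has multiplicity at least two in the union, (ii) J_1,…,J_l form a cluster, and (iii) 0 ∉ ⋃_{i=1}^l S_{J_i}. Then card(𝔅_p) = o(b_n^{(p_1+⋯+p_l−l)/2}) as n → ∞. -/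
open MeasureTheory Finset Filter ProbabilityTheory Topology
open scoped Classical Topology

noncomputable section

namespace RTM

/-- Indicator function of the real interval `[a, b]`. -/
def chi (a b t : ℝ) : ℝ := if a ≤ t ∧ t ≤ b then 1 else 0

/-- `blk` encodes a partition of `{0, …, N-1}` (as `Fin N`): `blk i` is the least element of
the block containing `i`. -/
def IsPartMap {N : ℕ} (blk : Fin N → Fin N) : Prop :=
  (∀ i, blk i ≤ i) ∧ (∀ i, blk (blk i) = blk i)

/-- The block of the partition containing `i`. -/
def block {N : ℕ} (blk : Fin N → Fin N) (i : Fin N) : Finset (Fin N) :=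
  univ.filter fun j => blk j = blk i

/-- Pair partitions: every block has exactly two elements. -/
def IsPairPartition {N : ℕ} (blk : Fin N → Fin N) : Prop :=
  IsPartMap blk ∧ ∀ i, (block blk i).card = 2

/-- `P₂(p,q)`: pair partitions of `{0, …, p+q-1}` with at least one crossing match, i.e. a
block meeting both `{0,…,p-1}` and `{p,…,p+q-1}`. -/
def IsP2Cross {N : ℕ} (p : ℕ) (blk : Fin N → Fin N) : Prop :=
  IsPairPartition blk ∧ ∃ i j : Fin N, (i : ℕ) < p ∧ p ≤ (j : ℕ) ∧ blk i = blk j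

/-- `P_{2,4}(p,q)`: partitions of `{0, …, p+q-1}` with one block of size 4 having two elements
in each half, all other blocks of size 2 and contained in one of the two halves. -/
def IsP24 {N : ℕ} (p : ℕ) (blk : Fin N → Fin N) : Prop :=
  IsPartMap blk ∧
    ∃ i0 : Fin N, (block blk i0).card = 4 ∧
      ((block blk i0).filter fun i => (i : ℕ) < p).card = 2 ∧
      ∀ i : Fin N, blk i ≠ blk i0 →
        (block blk i).card = 2 ∧
          ((∀ j ∈ block blk i, (j : ℕ) < p) ∨ ∀ j ∈ block blk i, p ≤ (j : ℕ))

/-- `ε_π(i) = 1` if `i` is the least element of its block, `-1` otherwise. -/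
def eps {N : ℕ} (blk : Fin N → Fin N) (i : Fin N) : ℝ := if blk i = i then 1 else -1

/-- `τ_π(i) = 1` if `i` is the least element of its block, or the largest element of a block of
size 4; `-1` otherwise. -/
def tau {N : ℕ} (blk : Fin N → Fin N) (i : Fin N) : ℝ :=
  if blk i = i ∨ ((block blk i).card = 4 ∧ ∀ j ∈ block blk i, j ≤ i) then 1 else -1

/-- The `y`-variables obtained from the `x`-variables (one for each block, indexed by the least
element of the block) via `y i = s i * x (blk i)` where `s` is the sign function (`ε_π`/`τ_π`). -/
def yvar {N : ℕ} (blk : Fin N → Fin N) (s : Fin N → ℝ) (x : Fin N → ℝ) (i : Fin N) : ℝ :=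
  s i * x (blk i)

/-- Product measure on the `x`-variables: Lebesgue measure on the coordinates indexed by least
elements of blocks (one coordinate for each block), and the Dirac mass at `0` on the remaining
(unused) coordinates.  Integrating against it realizes the multiple integral over the block
variables `x_1, …, x_{#blocks}`. -/
def repMeasure (N : ℕ) (blk : Fin N → Fin N) : Measure (Fin N → ℝ) :=
  haveI : ∀ i : Fin N,
      SigmaFinite (if blk i = i then (volume : Measure ℝ) else Measure.dirac 0) := fun i => by
    split <;> infer_instance
  Measure.pi fun i => if blk i = i then (volume : Measure ℝ) else Measure.dirac 0

/-- Partial sum `y_1 + ⋯ + y_{j+1}` (0-indexed: entries with index `≤ j`). -/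
def psum1 {N : ℕ} (y : Fin N → ℝ) (j : ℕ) : ℝ :=
  ∑ i ∈ univ.filter (fun i : Fin N => (i : ℕ) ≤ j), y i

/-- Partial sum `y_{p+1} + ⋯ + y_{j+1}` (0-indexed: entries with `p ≤ index ≤ j`). -/
def psum2 {N : ℕ} (y : Fin N → ℝ) (p j : ℕ) : ℝ :=
  ∑ i ∈ univ.filter (fun i : Fin N => p ≤ (i : ℕ) ∧ (i : ℕ) ≤ j), y i

/-- Coefficient of the block variable `x_r` in `y_1 + ⋯ + y_p`. -/
def ccoef {N : ℕ} (blk : Fin N → Fin N) (s : Fin N → ℝ) (p : ℕ) (r : Fin N) : ℝ :=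
  ∑ i ∈ univ.filter (fun i : Fin N => (i : ℕ) < p ∧ blk i = r), s i

/-- The type I integral `f_I^∓(π)` (`sgn = 1` gives `f_I^-`, `sgn = -1` gives `f_I^+`):
the Dirac delta `δ(y_1 + ⋯ + y_p)` is evaluated by solving the linear constraint for the block
variable `x_{r0}` (`r0` the least block index occurring with a nonzero coefficient), which
produces the Jacobian factor `|c(r0)|⁻¹`; the auxiliary factor `(2)⁻¹ ∫ χ_{[-1,1]}(x_{r0})` is
a normalization eliminating the then-unused coordinate `x_{r0}`. -/
def fI {N : ℕ} (blk : Fin N → Fin N) (p : ℕ) (b sgn : ℝ) : ℝ :=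
  if h : (univ.filter fun r : Fin N => blk r = r ∧ ccoef blk (eps blk) p r ≠ 0).Nonempty then
    (2 * |ccoef blk (eps blk) p
        ((univ.filter fun r : Fin N => blk r = r ∧ ccoef blk (eps blk) p r ≠ 0).min' h)|)⁻¹ *
      ∫ z : ℝ × ℝ × (Fin N → ℝ),
        (fun r0 : Fin N =>
          (fun x : Fin N → ℝ =>
            chi 0 1 z.1 * chi 0 1 z.2.1 * (∏ r : Fin N, chi (-1) 1 (z.2.2 r)) *
              chi (-1) 1 (x r0) *
              (∏ j ∈ range p, chi 0 1 (z.1 + b * psum1 (yvar blk (eps blk) x) j)) *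
              ∏ j ∈ Finset.Ico p N,
                chi 0 1 (z.2.1 + sgn * (b * psum2 (yvar blk (eps blk) x) p j)))
          (Function.update z.2.2 r0
            (-(∑ r ∈ univ.erase r0, ccoef blk (eps blk) p r * z.2.2 r) /
              ccoef blk (eps blk) p r0)))
        ((univ.filter fun r : Fin N => blk r = r ∧ ccoef blk (eps blk) p r ≠ 0).min' h)
        ∂((volume : Measure ℝ).prod ((volume : Measure ℝ).prod (repMeasure N blk)))
  else 0

/-- The type II integral `f_{II}^∓(π)` (`sgn = 1` gives `f_{II}^-`, `sgn = -1` gives `f_{II}^+`). -/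
def fII {N : ℕ} (blk : Fin N → Fin N) (p : ℕ) (b sgn : ℝ) : ℝ :=
  ∫ z : ℝ × ℝ × (Fin N → ℝ),
    chi 0 1 z.1 * chi 0 1 z.2.1 * (∏ r : Fin N, chi (-1) 1 (z.2.2 r)) *
      (∏ j ∈ range p, chi 0 1 (z.1 + b * psum1 (yvar blk (tau blk) z.2.2) j)) *
      ∏ j ∈ Finset.Ico p N,
        chi 0 1 (z.2.1 + sgn * (b * psum2 (yvar blk (tau blk) z.2.2) p j))
    ∂((volume : Measure ℝ).prod ((volume : Measure ℝ).prod (repMeasure N blk)))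

/-- The limiting covariance `σ_{p,q}` (for `p + q` even; for `p + q` odd all the index sets
below are empty and the expression vanishes). -/
def sigmaPQ (κ b : ℝ) (p q : ℕ) : ℝ :=
  (∑ blk ∈ (univ : Finset (Fin (p + q) → Fin (p + q))).filter (IsP2Cross p),
      (fI blk p b 1 + fI blk p b (-1))) +
    (κ - 1) * ∑ blk ∈ (univ : Finset (Fin (p + q) → Fin (p + q))).filter (IsP24 p),
      (fII blk p b 1 + fII blk p b (-1))

/-- `σ_{p,q}` extended by `0` to odd `p+q`. -/
def sigmaCov (κ b : ℝ) (p q : ℕ) : ℝ := if Even (p + q) then sigmaPQ κ b p q else 0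

/-- The limiting moment `M_N` (nonzero only for even `N`). -/
def Mmoment (b : ℝ) (N : ℕ) : ℝ :=
  ∑ blk ∈ (univ : Finset (Fin N → Fin N)).filter IsPairPartition,
    ∫ z : ℝ × (Fin N → ℝ),
      chi 0 1 z.1 * (∏ r : Fin N, chi (-1) 1 (z.2 r)) *
        ∏ j ∈ range N, chi 0 1 (z.1 + b * psum1 (yvar blk (eps blk) z.2) j)
      ∂((volume : Measure ℝ).prod (repMeasure N blk))

/-- Toeplitz band matrix `(η_{ij} a_{i-j})_{i,j=1}^n` with bandwidth `bn`. -/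
def toeplitzBand {α : Type*} [Zero α] (n bn : ℕ) (a : ℤ → α) :
    Matrix (Fin n) (Fin n) α :=
  Matrix.of fun i j => if |((i : ℕ) : ℤ) - ((j : ℕ) : ℤ)| ≤ (bn : ℤ) then
    a (((i : ℕ) : ℤ) - ((j : ℕ) : ℤ)) else 0

/-- The symmetric symbol with zero diagonal entry built from `{a_j}_{j ≥ 1}`. -/
def symb {Ω : Type*} (a : ℕ → Ω → ℝ) (ω : Ω) (d : ℤ) : ℝ :=
  if d = 0 then 0 else a d.natAbs ω

/-- The normalized random symmetric Toeplitz band matrix `A_n = T_n/√b_n`. -/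
def matA {Ω : Type*} (a : ℕ → Ω → ℝ) (bn : ℕ → ℕ) (n : ℕ) (ω : Ω) :
    Matrix (Fin n) (Fin n) ℝ :=
  (Real.sqrt (bn n))⁻¹ • toeplitzBand n (bn n) (symb a ω)

/-- The linear eigenvalue statistic `ω_p = (√b_n/n) (tr A_n^p − E tr A_n^p)`. -/
def omegaP {Ω : Type*} [MeasurableSpace Ω] (μ : Measure Ω) (a : ℕ → Ω → ℝ) (bn : ℕ → ℕ)
    (p n : ℕ) (ω : Ω) : ℝ :=
  Real.sqrt (bn n) / n *
    (Matrix.trace (matA a bn n ω ^ p) - ∫ ω', Matrix.trace (matA a bn n ω' ^ p) ∂μ)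

/-- Convergence in distribution of real random variables to the law `ν`: convergence of the
integrals of all bounded continuous test functions. -/
def ConvInDist {Ω : Type*} [MeasurableSpace Ω] (μ : Measure Ω) (X : ℕ → Ω → ℝ)
    (ν : Measure ℝ) : Prop :=
  ∀ g : BoundedContinuousFunction ℝ ℝ,
    Tendsto (fun n => ∫ ω, g (X n ω) ∂μ) atTop (𝓝 (∫ x, g x ∂ν))


/-- A vector `J = (j_1, …, j_p)` is balanced: `j_1 + ⋯ + j_p = 0`. -/
def Balanced {p : ℕ} (J : Fin p → ℤ) : Prop := (∑ u : Fin p, J u) = 0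

/-- Two vectors are correlated if their projections (multisets of absolute values of entries)
have an element in common. -/
def Correlated {p q : ℕ} (J : Fin p → ℤ) (K : Fin q → ℤ) : Prop :=
  ∃ (u : Fin p) (v : Fin q), (J u).natAbs = (K v).natAbs

/-- The vectors `J_1, …, J_l` form a (single) cluster: any two of them are joined by a chain of
consecutively correlated vectors. -/
def IsCluster {l : ℕ} {pp : Fin l → ℕ} (T : ∀ t : Fin l, Fin (pp t) → ℤ) : Prop :=
  ∀ s t : Fin l, Relation.ReflTransGen (fun u v => Correlated (T u) (T v)) s t

/-- The vectors `J ∈ {±1, …, ±bn}^p`. -/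
def BFinset (bn p : ℕ) : Finset (Fin p → ℤ) :=
  Fintype.piFinset fun _ : Fin p => (Finset.Icc (-(bn : ℤ)) (bn : ℤ)).erase 0


/-!
Group the tuples by their pattern: which entries share an absolute value, and the sign of each
entry. For a pattern with `d` classes, a tuple is determined by its vector of class values
`v ∈ [1, b]^d`, and balancedness says `A v = 0`, where `A t a` is the signed multiplicity of the
class `a` in `J_t`. If `r` columns of `A` are linearly independent, a solution is determined by
its other `d - r` coordinates, so the pattern contributes at most `b^(d - r)` tuples.

The heart is the existence of such an `r` with `l + 2d < p_1 + ⋯ + p_l + 2r`. A minimal set `F`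
of columns covering the nonzero rows has private rows, hence is independent. Assign each row to a
column: a nonzero row to a column of `F` on which it is nonzero, a zero row (all of whose classes
occur at least twice in it) to a class it shares with another vector. Counting column by column
gives `l + 2d ≤ P + 2|F|`. In the equality case either some column lies outside the span of `F`,
or every class only joins rows assigned to one and the same column; as the vectors form a
cluster, all rows are then assigned to a single column, which `l ≥ 3` and balancedness (a nonzero
row has at least two nonzero entries) rule out.

Since the number of patterns does not depend on `b_n`, the count is `O(b_n^((P - l - 1)/2))`.
-/

section ColumnCover

variable {K τ ι : Type*} [Field K]

lemma exists_cover_with_private_rows [Fintype ι] (A : Matrix τ ι K) :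
    ∃ F : Finset ι, (∀ t r, A t r ≠ 0 → ∃ f ∈ F, A t f ≠ 0) ∧
      ∀ f ∈ F, ∃ t, A t f ≠ 0 ∧ ∀ f' ∈ F, f' ≠ f → A t f' = 0 := by
  obtain ⟨F, hF, hmin⟩ := exists_min_image
    (univ.filter fun F : Finset ι => ∀ t r, A t r ≠ 0 → ∃ f ∈ F, A t f ≠ 0) card
    ⟨univ, mem_filter.mpr ⟨mem_univ _, fun t r h => ⟨r, mem_univ r, h⟩⟩⟩
  refine ⟨F, (mem_filter.mp hF).2, fun f hf => ?_⟩
  by_contra! hshared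
  have hcover : ∀ t r, A t r ≠ 0 → ∃ f' ∈ F.erase f, A t f' ≠ 0 := by
    intro t r htr
    obtain ⟨f', hf', htf'⟩ := (mem_filter.mp hF).2 t r htr
    by_cases hff : f' = f
    · obtain ⟨f'', hf'', hne, htf''⟩ := hshared t (hff ▸ htf')
      exact ⟨f'', mem_erase.mpr ⟨hne, hf''⟩, htf''⟩
    · exact ⟨f', mem_erase.mpr ⟨hff, hf'⟩, htf'⟩
  have := hmin (F.erase f) (mem_filter.mpr ⟨mem_univ _, hcover⟩)
  rw [card_erase_of_mem hf] at this
  have := card_pos.mpr ⟨f, hf⟩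
  omega

lemma linearIndepOn_col_of_private_rows {A : Matrix τ ι K} {F : Finset ι}
    (h : ∀ f ∈ F, ∃ t, A t f ≠ 0 ∧ ∀ f' ∈ F, f' ≠ f → A t f' = 0) :
    LinearIndepOn K A.col (F : Set ι) := by
  rw [linearIndepOn_finset_iff]
  intro a ha f hf
  obtain ⟨t, htf, hother⟩ := h f hf
  have hrow := congrFun ha t
  simp only [Finset.sum_apply, Pi.smul_apply, Matrix.col_apply, smul_eq_mul,
    Pi.zero_apply] at hrow
  rw [sum_eq_single f (fun f' hf' hne => by rw [hother f' hf' hne, mul_zero])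
    (fun h => absurd hf h)] at hrow
  exact (mul_eq_zero.mp hrow).resolve_right htf

lemma exists_shared_col [Nontrivial τ] {N : τ → ι → ℕ}
    (hconn : ∀ t t', Relation.ReflTransGen (fun a b => ∃ r, N a r ≠ 0 ∧ N b r ≠ 0) t t')
    (t : τ) : ∃ r, N t r ≠ 0 ∧ ∃ t' ≠ t, N t' r ≠ 0 := by
  obtain ⟨t', ht'⟩ := exists_ne t
  by_contra! hlonely
  have hstuck : ∀ x, Relation.ReflTransGen (fun a b => ∃ r, N a r ≠ 0 ∧ N b r ≠ 0) t x →
      x = t := by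
    intro x hx
    induction hx with
    | refl => rfl
    | tail _ hbc ih =>
      obtain ⟨r, hbr, hcr⟩ := hbc
      subst ih
      by_contra hne
      exact hcr (hlonely r hbr _ hne)
  exact ht' (hstuck t' (hconn t t'))

lemma exists_assignment [Nontrivial τ] {A : Matrix τ ι K} {N : τ → ι → ℕ} {F : Finset ι}
    (hN0 : ∀ t r, N t r = 0 → A t r = 0)
    (hconn : ∀ t t', Relation.ReflTransGen (fun a b => ∃ r, N a r ≠ 0 ∧ N b r ≠ 0) t t')
    (hcover : ∀ t r, A t r ≠ 0 → ∃ f ∈ F, A t f ≠ 0) :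
    ∃ g : τ → ι, (∀ t, N t (g t) ≠ 0) ∧
      ∀ t, g t ∉ F → (∀ r, A t r = 0) ∧ ∃ t' ≠ t, N t' (g t) ≠ 0 := by
  have hassign : ∀ t, ∃ r, N t r ≠ 0 ∧
      (r ∉ F → (∀ r', A t r' = 0) ∧ ∃ t' ≠ t, N t' r ≠ 0) := by
    intro t
    by_cases hzero : ∀ r, A t r = 0
    · obtain ⟨r, htr, t', hne, ht'r⟩ := exists_shared_col hconn t
      exact ⟨r, htr, fun _ => ⟨hzero, t', hne, ht'r⟩⟩
    · push Not at hzero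
      obtain ⟨r, hr⟩ := hzero
      obtain ⟨f, hf, htf⟩ := hcover t r hr
      exact ⟨f, fun h => htf (hN0 t f h), fun h => absurd hf h⟩
  choose g hg hgF using hassign
  exact ⟨g, hg, hgF⟩

end ColumnCover

section Assignment

variable {K τ ι : Type*} [Field K] {A : Matrix τ ι K} {N : τ → ι → ℕ} {F : Finset ι}
  {g : τ → ι}

lemma two_le_of_assigned_outside (hN1 : ∀ t r, N t r = 1 → A t r ≠ 0)
    (hg : ∀ t, N t (g t) ≠ 0) (hgF : ∀ t, g t ∉ F → ∀ r, A t r = 0) {t : τ}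
    (ht : g t ∉ F) : 2 ≤ N t (g t) := by
  have := hg t
  have := mt (hN1 t (g t)) (not_not.mpr (hgF t ht (g t)))
  omega

lemma ite_le_of_assigned (hg : ∀ t, N t (g t) ≠ 0) (t : τ) (r : ι) :
    (if g t = r then 1 else 0) ≤ N t r := by
  split_ifs with h
  · exact Nat.one_le_iff_ne_zero.mpr (h ▸ hg t)
  · exact Nat.zero_le _

variable [Fintype τ]

lemma card_fiber_add_two_le (hN1 : ∀ t r, N t r = 1 → A t r ≠ 0)
    (hcol : ∀ r, 2 ≤ ∑ t, N t r) (hg : ∀ t, N t (g t) ≠ 0)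
    (hgF : ∀ t, g t ∉ F → (∀ r, A t r = 0) ∧ ∃ t' ≠ t, N t' (g t) ≠ 0) (r : ι) :
    2 + #{t | g t = r} ≤ ∑ t, N t r + if r ∈ F then 2 else 0 := by
  split_ifs with hr
  · have : #{t | g t = r} ≤ ∑ t, N t r := by
      rw [card_filter]
      exact sum_le_sum fun t _ => ite_le_of_assigned hg t r
    omega
  · have htwo : ∀ t, g t = r → 2 ≤ N t r := fun t h =>
      h ▸ two_le_of_assigned_outside hN1 hg (fun t h => (hgF t h).1) (h ▸ hr)
    have hdouble : 2 * #{t | g t = r} ≤ ∑ t, N t r := by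
      rw [card_filter, mul_sum]
      gcongr with t
      split_ifs with h
      · simpa using htwo t h
      · simp
    obtain hz | hz | hz : #{t | g t = r} = 0 ∨ #{t | g t = r} = 1 ∨ 2 ≤ #{t | g t = r} := by
      omega
    · have := hcol r
      omega
    · obtain ⟨t, ht⟩ := card_eq_one.mp hz
      have hgt : g t = r := by
        have : t ∈ ({t | g t = r} : Finset τ) := by rw [ht]; exact mem_singleton_self t
        exact (mem_filter.mp this).2
      obtain ⟨t', hne, ht'⟩ := (hgF t (hgt ▸ hr)).2
      have hpair : N t r + N t' r ≤ ∑ x, N x r :=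
        (sum_pair (f := fun x => N x r) hne.symm).symm.le.trans
          (sum_le_sum_of_subset (subset_univ _))
      have := htwo t hgt
      rw [hgt] at ht'
      omega
    · omega

lemma card_le_sum_outside {c : ι} {S : Finset τ} (hS : ∀ y ∈ S, g y ≠ c ∧ N y c ≠ 0) :
    #S ≤ ∑ y with g y ≠ c, N y c := by
  calc #S = #S • 1 := by rw [smul_eq_mul, mul_one]
    _ ≤ ∑ y ∈ S, N y c := card_nsmul_le_sum _ _ _ fun y hy => Nat.one_le_iff_ne_zero.mpr (hS y hy).2
    _ ≤ ∑ y with g y ≠ c, N y c :=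
      sum_le_sum_of_subset fun y hy => mem_filter.mpr ⟨mem_univ y, (hS y hy).1⟩

/-- The equality case of `card_fiber_add_two_le` at every column, with the columns in `F`
spanning all columns. -/
structure IsTight (A : Matrix τ ι K) (N : τ → ι → ℕ) (F : Finset ι) (g : τ → ι) : Prop where
  zero : ∀ t r, N t r = 0 → A t r = 0
  one : ∀ t r, N t r = 1 → A t r ≠ 0
  col : ∀ r, 2 ≤ ∑ t, N t r
  assign : ∀ t, N t (g t) ≠ 0
  assign_outside : ∀ t, g t ∉ F → ∀ r, A t r = 0
  count_mem : ∀ f ∈ F, ∀ t, N t f = if g t = f then 1 else 0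
  count_notMem : ∀ c ∉ F, ∑ t, N t c = 2 + #{t | g t = c}
  span : ∀ c, A.col c ∈ Submodule.span K (A.col '' F)

namespace IsTight

lemma col_eq_smul_on_fiber (h : IsTight A N F g) {f : ι} (hf : f ∈ F) (c : ι) :
    ∃ a : K, ∀ y, g y = f → A y c = a * A y f := by
  obtain ⟨a, ha⟩ := (Submodule.mem_span_image_finset_iff_exists_fun' K).mp (h.span c)
  refine ⟨a f, fun y hy => ?_⟩
  have hyc := congrFun ha y
  simp only [Finset.sum_apply, Pi.smul_apply, Matrix.col_apply, smul_eq_mul] at hyc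
  rw [← hyc, sum_eq_single f (fun i hi hne => ?_) (fun h => absurd hf h)]
  rw [h.zero y i (by rw [h.count_mem i hi y, if_neg (by rw [hy]; exact hne.symm)]), mul_zero]

lemma col_ne_zero_on_fiber (h : IsTight A N F g) {t x : τ} {c : ι} (hgt : g t ∈ F)
    (hx : g x = g t) (htc : A t c ≠ 0) : A x c ≠ 0 := by
  obtain ⟨a, ha⟩ := h.col_eq_smul_on_fiber hgt c
  rw [ha x hx]
  rw [ha t rfl] at htc
  exact mul_ne_zero (left_ne_zero_of_mul htc)
    (h.one x (g t) (by rw [h.count_mem _ hgt x, if_pos hx]))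

lemma eq_of_count_ne_zero_of_mem (h : IsTight A N F g) {t : τ} {c : ι} (hc : c ∈ F)
    (htc : N t c ≠ 0) : g t = c := by
  by_contra hne
  exact htc (by rw [h.count_mem c hc t, if_neg hne])

lemma two_le_card_fiber (h : IsTight A N F g) {f : ι} (hf : f ∈ F) :
    2 ≤ #{y | g y = f} := by
  rw [card_filter, ← sum_congr rfl fun y _ => h.count_mem f hf y]
  exact h.col f

lemma sum_outside_add_card_fiber_le_two (h : IsTight A N F g) {c : ι} (hc : c ∉ F) :
    ∑ y with g y ≠ c, N y c + #{y | g y = c} ≤ 2 := by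
  have hfiber : 2 * #{y | g y = c} ≤ ∑ y with g y = c, N y c := by
    rw [mul_comm, ← smul_eq_mul]
    exact card_nsmul_le_sum _ _ _ fun y hy => (mem_filter.mp hy).2 ▸
      two_le_of_assigned_outside h.one h.assign h.assign_outside ((mem_filter.mp hy).2 ▸ hc)
  have := sum_filter_add_sum_filter_not univ (fun y => g y = c) (fun y => N y c)
  simp only [← ne_eq] at this
  have := h.count_notMem c hc
  omega

lemma eq_of_count_ne_zero_of_notMem (h : IsTight A N F g) {t x : τ} {c : ι} (hc : c ∉ F)
    (htc : A t c ≠ 0) (hxc : N x c ≠ 0) : g x = g t := by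
  have hgt : g t ∈ F := by
    by_contra hgt
    exact htc (h.assign_outside t hgt c)
  have hB : ∀ y ∈ ({y | g y = g t} : Finset τ), g y ≠ c ∧ N y c ≠ 0 := fun y hy =>
    have hy : g y = g t := (mem_filter.mp hy).2
    ⟨fun hyc => hc (by rw [← hyc, hy]; exact hgt),
      mt (h.zero y c) (h.col_ne_zero_on_fiber hgt hy htc)⟩
  have hB2 := h.two_le_card_fiber hgt
  have hbound := h.sum_outside_add_card_fiber_le_two hc
  by_contra hx
  by_cases hxg : g x = c
  · have := card_le_sum_outside hB
    have : 0 < #{y | g y = c} := card_pos.mpr ⟨x, mem_filter.mpr ⟨mem_univ x, hxg⟩⟩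
    omega
  · have hxB : x ∉ ({y | g y = g t} : Finset τ) := fun hxB => hx (mem_filter.mp hxB).2
    have := card_le_sum_outside (S := insert x ({y | g y = g t} : Finset τ)) fun y hy => by
      rcases mem_insert.mp hy with rfl | hy
      exacts [⟨hxg, hxc⟩, hB y hy]
    rw [card_insert_of_notMem hxB] at this
    omega

lemma eq_of_count_ne_zero (h : IsTight A N F g) {t t' : τ} {c : ι} (htc : N t c ≠ 0)
    (ht'c : N t' c ≠ 0) : g t = g t' := by
  by_cases hc : c ∈ F
  · rw [h.eq_of_count_ne_zero_of_mem hc htc, h.eq_of_count_ne_zero_of_mem hc ht'c]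
  by_cases hA : A t c ≠ 0
  · exact (h.eq_of_count_ne_zero_of_notMem hc hA ht'c).symm
  by_cases hA' : A t' c ≠ 0
  · exact h.eq_of_count_ne_zero_of_notMem hc hA' htc
  by_cases htt : t = t'
  · rw [htt]
  have h2 : 2 ≤ N t c := by have := mt (h.one t c) hA; omega
  have h2' : 2 ≤ N t' c := by have := mt (h.one t' c) hA'; omega
  have hbound := h.sum_outside_add_card_fiber_le_two hc
  have hmem : ∀ y, g y = c → y ∈ ({y | g y = c} : Finset τ) := fun y hy =>
    mem_filter.mpr ⟨mem_univ y, hy⟩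
  have hle : ∀ y, g y ≠ c → N y c ≤ ∑ y with g y ≠ c, N y c := fun y hy =>
    single_le_sum (f := fun y => N y c) (fun _ _ => Nat.zero_le _)
      (mem_filter.mpr ⟨mem_univ y, hy⟩)
  rcases eq_or_ne (g t) c with hgt | hgt <;> rcases eq_or_ne (g t') c with hgt' | hgt'
  · rw [hgt, hgt']
  · have := card_pos.mpr ⟨t, hmem t hgt⟩
    have := hle t' hgt'
    omega
  · have := card_pos.mpr ⟨t', hmem t' hgt'⟩
    have := hle t hgt
    omega
  · have hpair : N t c + N t' c ≤ ∑ y with g y ≠ c, N y c :=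
      (sum_pair (f := fun y => N y c) htt).symm.le.trans <| sum_le_sum_of_subset fun y hy => by
        rcases mem_insert.mp hy with rfl | hy
        · exact mem_filter.mpr ⟨mem_univ _, hgt⟩
        · exact mem_filter.mpr ⟨mem_univ _, (mem_singleton.mp hy) ▸ hgt'⟩
    omega

lemma false_of_connected (h : IsTight A N F g)
    (hrow : ∀ t r, A t r ≠ 0 → ∃ r' ≠ r, A t r' ≠ 0)
    (hconn : ∀ t t', Relation.ReflTransGen (fun a b => ∃ r, N a r ≠ 0 ∧ N b r ≠ 0) t t')
    (hτ : 3 ≤ Fintype.card τ) : False := by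
  obtain ⟨t₀⟩ : Nonempty τ := Fintype.card_pos_iff.mp (by omega)
  have hconst : ∀ x, g x = g t₀ := fun x => by
    induction hconn t₀ x with
    | refl => rfl
    | tail _ hbc ih =>
      obtain ⟨r, hbr, hcr⟩ := hbc
      rw [← ih]
      exact (h.eq_of_count_ne_zero hbr hcr).symm
  by_cases h₀ : g t₀ ∈ F
  · have hA₀ : A t₀ (g t₀) ≠ 0 := h.one t₀ (g t₀) (by rw [h.count_mem _ h₀ t₀, if_pos rfl])
    obtain ⟨c, hne, hc⟩ := hrow t₀ (g t₀) hA₀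
    have hcF : c ∉ F := fun hcF => hne (h.eq_of_count_ne_zero_of_mem hcF (mt (h.zero t₀ c) hc)).symm
    have := card_le_sum_outside (g := g) (N := N) (c := c) (S := univ) fun y _ =>
      ⟨hconst y ▸ Ne.symm hne, mt (h.zero y c) (h.col_ne_zero_on_fiber h₀ (hconst y) hc)⟩
    have := h.sum_outside_add_card_fiber_le_two hcF
    rw [card_univ] at *
    omega
  · have := h.sum_outside_add_card_fiber_le_two h₀
    rw [filter_true_of_mem fun x _ => hconst x, card_univ] at this
    omega

end IsTight

end Assignment

section Rank

variable {K τ ι : Type*} [Field K] [Fintype ι]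

lemma eq_of_mulVec_eq_of_eqOn_compl {A : Matrix τ ι K} {R : Finset ι}
    (hR : LinearIndepOn K A.col (R : Set ι)) {v w : ι → K} (h : A.mulVec v = A.mulVec w)
    (hout : ∀ i ∉ R, v i = w i) : v = w := by
  have hcomb : ∑ r ∈ R, (v r - w r) • A.col r = 0 := by
    ext t
    have ht := congrFun h t
    simp only [Matrix.mulVec, dotProduct] at ht
    simp only [Finset.sum_apply, Pi.smul_apply, Matrix.col_apply, smul_eq_mul, Pi.zero_apply]
    rw [sum_subset (subset_univ R) fun i _ hi => by rw [hout i hi, sub_self, zero_mul]]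
    simp only [sub_mul, sum_sub_distrib]
    simp only [mul_comm _ (A t _), ht, sub_self]
  funext i
  by_cases hi : i ∈ R
  · exact sub_eq_zero.mp (linearIndepOn_finset_iff.mp hR _ hcomb i hi)
  · exact hout i hi

lemma card_filter_mulVec_eq_zero_le [Fintype τ] [CharZero K] [DecidableEq K] [DecidableEq ι]
    (A : Matrix τ ι K) {R : Finset ι} (hR : LinearIndepOn K A.col (R : Set ι)) (b : ℕ) :
    #{v ∈ Fintype.piFinset fun _ : ι => Icc 1 b | A.mulVec (fun i => (v i : K)) = 0} ≤
      b ^ (Fintype.card ι - #R) := by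
  calc _ ≤ #(Fintype.piFinset fun _ : ↥(Rᶜ) => Icc 1 b) := by
        refine card_le_card_of_injOn (fun v i => v i) (fun v hv => ?_) fun v hv v' hv' heq => ?_
        · exact Fintype.mem_piFinset.mpr fun i => Fintype.mem_piFinset.mp (mem_filter.mp hv).1 i
        have hcast := eq_of_mulVec_eq_of_eqOn_compl hR
          (((mem_filter.mp hv).2).trans ((mem_filter.mp hv').2).symm)
          fun i hi => congrArg Nat.cast (congrFun heq ⟨i, mem_compl.mpr hi⟩)
        exact funext fun i => by exact_mod_cast congrFun hcast i
    _ = b ^ (Fintype.card ι - #R) := by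
        simp [Fintype.card_piFinset, card_compl]

variable [Fintype τ]

section Counting

variable {A : Matrix τ ι K} {N : τ → ι → ℕ} {F : Finset ι} {g : τ → ι}

lemma sum_card_fiber_add_two_eq :
    ∑ r, (2 + #{t | g t = r}) = 2 * Fintype.card ι + Fintype.card τ := by
  rw [sum_add_distrib, ← card_eq_sum_card_fiberwise fun t _ => mem_univ (g t)]
  simp [mul_comm]

lemma sum_sum_add_ite_mem_eq :
    ∑ r, (∑ t, N t r + if r ∈ F then 2 else 0) = ∑ t, ∑ r, N t r + 2 * #F := by
  rw [sum_add_distrib, sum_comm, sum_ite_mem, univ_inter, sum_const, smul_eq_mul, mul_comm]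

lemma card_add_two_mul_card_le (hN1 : ∀ t r, N t r = 1 → A t r ≠ 0)
    (hcol : ∀ r, 2 ≤ ∑ t, N t r) (hg : ∀ t, N t (g t) ≠ 0)
    (hgF : ∀ t, g t ∉ F → (∀ r, A t r = 0) ∧ ∃ t' ≠ t, N t' (g t) ≠ 0) :
    Fintype.card τ + 2 * Fintype.card ι ≤ ∑ t, ∑ r, N t r + 2 * #F := by
  have := sum_le_sum fun r (_ : r ∈ univ) => card_fiber_add_two_le hN1 hcol hg hgF r
  rw [sum_card_fiber_add_two_eq, sum_sum_add_ite_mem_eq] at this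
  omega

lemma isTight_of_card_add_two_mul_card_eq (hN0 : ∀ t r, N t r = 0 → A t r = 0)
    (hN1 : ∀ t r, N t r = 1 → A t r ≠ 0) (hcol : ∀ r, 2 ≤ ∑ t, N t r) (hg : ∀ t, N t (g t) ≠ 0)
    (hgF : ∀ t, g t ∉ F → (∀ r, A t r = 0) ∧ ∃ t' ≠ t, N t' (g t) ≠ 0)
    (heq : Fintype.card τ + 2 * Fintype.card ι = ∑ t, ∑ r, N t r + 2 * #F)
    (hspan : ∀ c, A.col c ∈ Submodule.span K (A.col '' F)) : IsTight A N F g := by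
  have htight : ∀ r, 2 + #{t | g t = r} = ∑ t, N t r + if r ∈ F then 2 else 0 := by
    refine fun r => (sum_eq_sum_iff_of_le fun r _ => card_fiber_add_two_le hN1 hcol hg hgF r).mp
      ?_ r (mem_univ r)
    rw [sum_card_fiber_add_two_eq, sum_sum_add_ite_mem_eq]
    omega
  refine ⟨hN0, hN1, hcol, hg, fun t h => (hgF t h).1, fun f hf t => ?_, fun c hc => ?_, hspan⟩
  · have hsum := htight f
    rw [if_pos hf, card_filter] at hsum
    have := sum_le_sum fun t (_ : t ∈ univ) => ite_le_of_assigned hg t f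
    exact ((sum_eq_sum_iff_of_le fun t _ => ite_le_of_assigned hg t f).mp (by omega) t
      (mem_univ t)).symm
  · have := htight c
    rw [if_neg hc] at this
    omega

end Counting

theorem exists_linearIndepOn_col_of_connected (A : Matrix τ ι K) (N : τ → ι → ℕ)
    (hN0 : ∀ t r, N t r = 0 → A t r = 0) (hN1 : ∀ t r, N t r = 1 → A t r ≠ 0)
    (hcol : ∀ r, 2 ≤ ∑ t, N t r) (hrow : ∀ t r, A t r ≠ 0 → ∃ r' ≠ r, A t r' ≠ 0)
    (hconn : ∀ t t', Relation.ReflTransGen (fun a b => ∃ r, N a r ≠ 0 ∧ N b r ≠ 0) t t')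
    (hτ : 3 ≤ Fintype.card τ) :
    ∃ R : Finset ι, LinearIndepOn K A.col (R : Set ι) ∧
      Fintype.card τ + 2 * Fintype.card ι < ∑ t, ∑ r, N t r + 2 * #R := by
  have : Nontrivial τ := Fintype.one_lt_card_iff_nontrivial.mp (by omega)
  obtain ⟨F, hcover, hprivate⟩ := exists_cover_with_private_rows A
  obtain ⟨g, hg, hgF⟩ := exists_assignment hN0 hconn hcover
  have hindep := linearIndepOn_col_of_private_rows hprivate
  rcases (card_add_two_mul_card_le hN1 hcol hg hgF).lt_or_eq with hlt | heq
  · exact ⟨F, hindep, hlt⟩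
  by_cases hspan : ∀ c, A.col c ∈ Submodule.span K (A.col '' F)
  · exact ((isTight_of_card_add_two_mul_card_eq hN0 hN1 hcol hg hgF heq hspan).false_of_connected
      hrow hconn hτ).elim
  push Not at hspan
  obtain ⟨c, hc⟩ := hspan
  have hcF : c ∉ F := fun h => hc (Submodule.subset_span ⟨c, h, rfl⟩)
  refine ⟨insert c F, by simpa using hindep.insert hc, ?_⟩
  rw [card_insert_of_notMem hcF]
  omega

end Rank

section Pattern

variable {l : ℕ} {pp : Fin l → ℕ}

def clusterSet (l : ℕ) (pp : Fin l → ℕ) (b : ℕ) : Finset (∀ t : Fin l, Fin (pp t) → ℤ) :=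
  (Fintype.piFinset fun t : Fin l => (BFinset b (pp t)).filter Balanced).filter
    (fun T : (∀ t : Fin l, Fin (pp t) → ℤ) =>
      (∀ (t : Fin l) (u : Fin (pp t)),
        2 ≤ ∑ t' : Fin l,
          ((univ.filter fun u' : Fin (pp t') =>
            (T t' u').natAbs = (T t u).natAbs).card)) ∧
      IsCluster T ∧ ∀ (t : Fin l) (u : Fin (pp t)), (T t u).natAbs ≠ 0)

lemma clusterSet_spec {b : ℕ} {T : ∀ t : Fin l, Fin (pp t) → ℤ} (hT : T ∈ clusterSet l pp b) :
    (∀ t u, T t u ≠ 0 ∧ (T t u).natAbs ≤ b) ∧ (∀ t, ∑ u, T t u = 0) ∧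
      (∀ t u, 2 ≤ ∑ t', #{u' | (T t' u').natAbs = (T t u).natAbs}) ∧ IsCluster T := by
  simp only [clusterSet, mem_filter, Fintype.mem_piFinset, BFinset, mem_erase, mem_Icc,
    Balanced] at hT
  obtain ⟨hentries, hmult, hcluster, -⟩ := hT
  refine ⟨fun t u => ?_, fun t => (hentries t).2, hmult, hcluster⟩
  have := (hentries t).1 u
  exact ⟨this.1, by omega⟩

abbrev AbsPattern (pp : Fin l → ℕ) : Type :=
  ((Σ t, Fin (pp t)) → (Σ t, Fin (pp t)) → Bool) × ((Σ t, Fin (pp t)) → SignType)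

def absPattern (T : ∀ t : Fin l, Fin (pp t) → ℤ) : AbsPattern pp :=
  (fun x y => decide ((T x.1 x.2).natAbs = (T y.1 y.2).natAbs), fun x => SignType.sign (T x.1 x.2))

variable (T₀ : ∀ t : Fin l, Fin (pp t) → ℤ)

def absValues : Finset ℕ := univ.image fun x : Σ t, Fin (pp t) => (T₀ x.1 x.2).natAbs

def absClass (x : Σ t, Fin (pp t)) : absValues T₀ :=
  ⟨(T₀ x.1 x.2).natAbs, mem_image_of_mem _ (mem_univ x)⟩

lemma absClass_surjective : Function.Surjective (absClass T₀) := fun a => by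
  obtain ⟨x, -, hx⟩ := mem_image.mp a.2
  exact ⟨x, Subtype.ext hx⟩

def absCount (t : Fin l) (a : absValues T₀) : ℕ := #{u | absClass T₀ ⟨t, u⟩ = a}

def signedAbsCount : Matrix (Fin l) (absValues T₀) ℚ := fun t a =>
  ∑ u with absClass T₀ ⟨t, u⟩ = a, (SignType.sign (T₀ t u) : ℚ)

def absLift (T : ∀ t : Fin l, Fin (pp t) → ℤ) (a : absValues T₀) : ℕ :=
  (T (Function.surjInv (absClass_surjective T₀) a).1
    (Function.surjInv (absClass_surjective T₀) a).2).natAbs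

variable {T₀} {T : ∀ t : Fin l, Fin (pp t) → ℤ}

lemma absLift_absClass (h : absPattern T = absPattern T₀) (x : Σ t, Fin (pp t)) :
    absLift T₀ T (absClass T₀ x) = (T x.1 x.2).natAbs := by
  have hx := congrArg Subtype.val (Function.surjInv_eq (absClass_surjective T₀) (absClass T₀ x))
  have hpat := congrFun (congrFun (congrArg Prod.fst h) (Function.surjInv
    (absClass_surjective T₀) (absClass T₀ x))) x
  simp only [absPattern, decide_eq_decide] at hpat
  exact hpat.mpr hx

lemma cast_eq_sign_mul_absLift (h : absPattern T = absPattern T₀) (t : Fin l) (u : Fin (pp t)) :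
    (T t u : ℚ) = SignType.sign (T₀ t u) * absLift T₀ T (absClass T₀ ⟨t, u⟩) := by
  have hsign : SignType.sign (T t u) = SignType.sign (T₀ t u) :=
    congrFun (congrArg Prod.snd h) ⟨t, u⟩
  rw [absLift_absClass h, ← hsign]
  simpa [Nat.cast_natAbs] using (sign_mul_abs (T t u : ℚ)).symm

lemma sum_signedAbsCount_mul_absLift (h : absPattern T = absPattern T₀) (t : Fin l) :
    ∑ a, signedAbsCount T₀ t a * absLift T₀ T a = ∑ u, (T t u : ℚ) := by
  simp only [signedAbsCount, sum_mul]
  rw [← sum_fiberwise univ (fun u => absClass T₀ ⟨t, u⟩) fun u => (T t u : ℚ)]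
  refine sum_congr rfl fun a _ => sum_congr rfl fun u hu => ?_
  rw [cast_eq_sign_mul_absLift h, (mem_filter.mp hu).2]

variable {b : ℕ}

lemma signedAbsCount_eq_zero_of_absCount_eq_zero {t : Fin l} {a : absValues T₀}
    (h : absCount T₀ t a = 0) : signedAbsCount T₀ t a = 0 := by
  simp only [signedAbsCount, card_eq_zero.mp h, sum_empty]

lemma signedAbsCount_ne_zero_of_absCount_eq_one (hT₀ : T₀ ∈ clusterSet l pp b) {t : Fin l}
    {a : absValues T₀} (h : absCount T₀ t a = 1) : signedAbsCount T₀ t a ≠ 0 := by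
  obtain ⟨u, hu⟩ := card_eq_one.mp h
  simp only [signedAbsCount] at hu ⊢
  rw [hu, sum_singleton]
  intro hsign
  have := cast_eq_sign_mul_absLift (T := T₀) rfl t u
  rw [hsign, zero_mul] at this
  exact ((clusterSet_spec hT₀).1 t u).1 (by exact_mod_cast this)

lemma two_le_sum_absCount (hT₀ : T₀ ∈ clusterSet l pp b) (a : absValues T₀) :
    2 ≤ ∑ t, absCount T₀ t a := by
  obtain ⟨x, rfl⟩ := absClass_surjective T₀ a
  convert (clusterSet_spec hT₀).2.2.1 x.1 x.2 using 3 with t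
  simp [absCount, absClass, Subtype.ext_iff]

lemma exists_ne_signedAbsCount_ne_zero (hT₀ : T₀ ∈ clusterSet l pp b) {t : Fin l}
    {a : absValues T₀} (ha : signedAbsCount T₀ t a ≠ 0) :
    ∃ a' ≠ a, signedAbsCount T₀ t a' ≠ 0 := by
  by_contra! hsingle
  have hsum := sum_signedAbsCount_mul_absLift (T := T₀) rfl t
  rw [sum_eq_single a (fun a' _ hne => by rw [hsingle a' hne, zero_mul]) (by simp)] at hsum
  obtain ⟨x, rfl⟩ := absClass_surjective T₀ a
  rw [absLift_absClass rfl] at hsum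
  have hrow : ∑ u, (T₀ t u : ℚ) = 0 := by exact_mod_cast (clusterSet_spec hT₀).2.1 t
  rw [hrow] at hsum
  exact mul_ne_zero ha (Nat.cast_ne_zero.mpr (Int.natAbs_ne_zero.mpr
    ((clusterSet_spec hT₀).1 x.1 x.2).1)) hsum

lemma absCount_connected (hT₀ : T₀ ∈ clusterSet l pp b) (t t' : Fin l) :
    Relation.ReflTransGen (fun s s' => ∃ a, absCount T₀ s a ≠ 0 ∧ absCount T₀ s' a ≠ 0) t t' := by
  refine Relation.ReflTransGen.mono (fun s s' (hc : Correlated (T₀ s) (T₀ s')) => ?_)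
    t t' ((clusterSet_spec hT₀).2.2.2 t t')
  obtain ⟨u, u', hu⟩ := hc
  refine ⟨absClass T₀ ⟨s, u⟩, ?_, ?_⟩
  · exact card_ne_zero.mpr ⟨u, mem_filter.mpr ⟨mem_univ u, rfl⟩⟩
  · exact card_ne_zero.mpr ⟨u', mem_filter.mpr ⟨mem_univ u', Subtype.ext hu.symm⟩⟩

lemma sum_sum_absCount :
    ∑ t, ∑ a, absCount T₀ t a = ∑ t, pp t := by
  refine sum_congr rfl fun t _ => ?_
  simp only [absCount]
  rw [← card_eq_sum_card_fiberwise fun u _ => mem_univ (absClass T₀ ⟨t, u⟩)]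
  simp

lemma card_absPattern_fiber_le (hl : 3 ≤ l) (hT₀ : T₀ ∈ clusterSet l pp b) :
    ∃ s, 2 * s + l + 1 ≤ ∑ t, pp t ∧
      #{T ∈ clusterSet l pp b | absPattern T = absPattern T₀} ≤ b ^ s := by
  obtain ⟨R, hR, hineq⟩ := exists_linearIndepOn_col_of_connected (signedAbsCount T₀) (absCount T₀)
    (fun _ _ => signedAbsCount_eq_zero_of_absCount_eq_zero)
    (fun _ _ => signedAbsCount_ne_zero_of_absCount_eq_one hT₀) (two_le_sum_absCount hT₀)
    (fun _ _ => exists_ne_signedAbsCount_ne_zero hT₀) (absCount_connected hT₀)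
    (by simpa using hl)
  refine ⟨Fintype.card (absValues T₀) - #R, ?_, ?_⟩
  · have := card_le_univ R
    rw [sum_sum_absCount, Fintype.card_fin] at hineq
    omega
  refine le_trans (card_le_card_of_injOn (absLift T₀) (fun T hT => ?_) fun T hT T' hT' heq => ?_)
    (card_filter_mulVec_eq_zero_le _ hR b)
  · obtain ⟨hT, hpat⟩ := mem_filter.mp hT
    refine mem_filter.mpr ⟨Fintype.mem_piFinset.mpr fun a => ?_, funext fun t => ?_⟩
    · obtain ⟨x, rfl⟩ := absClass_surjective T₀ a
      rw [absLift_absClass hpat, mem_Icc]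
      have := (clusterSet_spec hT).1 x.1 x.2
      exact ⟨Int.natAbs_pos.mpr this.1, this.2⟩
    · simp only [Matrix.mulVec, dotProduct, Pi.zero_apply]
      rw [sum_signedAbsCount_mul_absLift hpat]
      exact_mod_cast (clusterSet_spec hT).2.1 t
  · have hpat := (mem_filter.mp hT).2
    have hpat' := (mem_filter.mp hT').2
    funext t u
    have := cast_eq_sign_mul_absLift hpat t u
    rw [heq, ← cast_eq_sign_mul_absLift hpat' t u] at this
    exact_mod_cast this

end Pattern

lemma card_clusterSet_le {l : ℕ} (hl : 3 ≤ l) (pp : Fin l → ℕ) {b : ℕ} (hb : 1 ≤ b) :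
    (#(clusterSet l pp b) : ℝ) ≤
      Fintype.card (AbsPattern pp) * (b : ℝ) ^ (((∑ t, (pp t : ℝ)) - l) / 2 - 1 / 2) := by
  rw [card_eq_sum_card_fiberwise fun T _ => mem_univ (absPattern T), ← card_univ,
    ← nsmul_eq_mul, ← sum_const, Nat.cast_sum]
  refine sum_le_sum fun π _ => ?_
  by_cases hπ : ∃ T₀ ∈ clusterSet l pp b, absPattern T₀ = π
  · obtain ⟨T₀, hT₀, rfl⟩ := hπ
    obtain ⟨s, hs, hcard⟩ := card_absPattern_fiber_le hl hT₀
    have hs' : (s : ℝ) ≤ ((∑ t, (pp t : ℝ)) - l) / 2 - 1 / 2 := by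
      have : (2 * s + l + 1 : ℝ) ≤ ∑ t, (pp t : ℝ) := by exact_mod_cast hs
      linarith
    calc (#{T ∈ clusterSet l pp b | absPattern T = absPattern T₀} : ℝ) ≤ (b : ℝ) ^ s := by
          exact_mod_cast hcard
      _ = (b : ℝ) ^ (s : ℝ) := (Real.rpow_natCast _ _).symm
      _ ≤ _ := Real.rpow_le_rpow_of_exponent_le (by exact_mod_cast hb) hs'
  · push Not at hπ
    rw [filter_false_of_mem hπ, card_empty, Nat.cast_zero]
    positivity

lemma isLittleO_rpow_of_le_mul_rpow_sub_half {f : ℕ → ℝ} {x : ℕ → ℕ}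
    (hx : Tendsto x atTop atTop) {K e : ℝ}
    (hf : ∀ᶠ n in atTop, ‖f n‖ ≤ K * (x n : ℝ) ^ (e - 1 / 2)) :
    f =o[atTop] fun n => (x n : ℝ) ^ e := by
  have hdecay : Tendsto (fun n => (x n : ℝ) ^ (-(1 / 2 : ℝ))) atTop (𝓝 0) :=
    (tendsto_rpow_neg_atTop (by norm_num)).comp (tendsto_natCast_atTop_atTop.comp hx)
  have hsmall : (fun n => (x n : ℝ) ^ (-(1 / 2 : ℝ)) * (x n : ℝ) ^ e) =o[atTop]
      fun n => (x n : ℝ) ^ e := by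
    simpa using ((Asymptotics.isLittleO_one_iff ℝ).mpr hdecay).mul_isBigO
      (Asymptotics.isBigO_refl (fun n => (x n : ℝ) ^ e) atTop)
  refine (Asymptotics.IsBigO.of_bound K ?_).trans_isLittleO hsmall
  filter_upwards [hf, hx.eventually_ge_atTop 1] with n hn hxn
  have hpos : (0 : ℝ) < x n := by exact_mod_cast hxn
  rwa [Real.norm_of_nonneg (by positivity : (0 : ℝ) ≤ (x n : ℝ) ^ (-(1 / 2 : ℝ)) * (x n : ℝ) ^ e),
    ← Real.rpow_add hpos, neg_add_eq_sub]

theorem cluster_count_lemma_general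
    (bn : ℕ → ℕ) (hbinf : Tendsto bn atTop atTop)
    (l : ℕ) (hl : 3 ≤ l) (pp : Fin l → ℕ) :
    Asymptotics.IsLittleO atTop
      (fun n : ℕ =>
        (((Fintype.piFinset fun t : Fin l =>
              (BFinset (bn n) (pp t)).filter Balanced).filter
            (fun T : (∀ t : Fin l, Fin (pp t) → ℤ) =>
              (∀ (t : Fin l) (u : Fin (pp t)),
                2 ≤ ∑ t' : Fin l,
                  ((univ.filter fun u' : Fin (pp t') =>
                    (T t' u').natAbs = (T t u).natAbs).card)) ∧
              IsCluster T ∧ ∀ (t : Fin l) (u : Fin (pp t)), (T t u).natAbs ≠ 0)).card : ℝ))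
      (fun n : ℕ => (bn n : ℝ) ^ (((∑ t : Fin l, (pp t : ℝ)) - (l : ℝ)) / 2)) :=
  isLittleO_rpow_of_le_mul_rpow_sub_half hbinf <| (hbinf.eventually_ge_atTop 1).mono fun _ hn =>
    (Real.norm_of_nonneg (Nat.cast_nonneg _)).trans_le (card_clusterSet_le hl pp hn)

/-- Lemma 5.3: the number of `l`-tuples `(J_1, …, J_l)` of balanced vectors
with (i) every absolute value occurring with multiplicity at least two in the union of the
projections, (ii) the vectors forming a single cluster, and (iii) `0` not occurring, is
`o(b_n^{(p_1 + ⋯ + p_l - l)/2})`. -/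
theorem cluster_count_lemma
    (bn : ℕ → ℕ) (hbinf : Tendsto bn atTop atTop)
    (l : ℕ) (hl : 3 ≤ l) (pp : Fin l → ℕ) (hpp : ∀ t, 2 ≤ pp t) :
    Asymptotics.IsLittleO atTop
      (fun n : ℕ =>
        (((Fintype.piFinset fun t : Fin l =>
              (BFinset (bn n) (pp t)).filter Balanced).filter
            (fun T : (∀ t : Fin l, Fin (pp t) → ℤ) =>
              (∀ (t : Fin l) (u : Fin (pp t)),
                2 ≤ ∑ t' : Fin l,
                  ((univ.filter fun u' : Fin (pp t') =>
                    (T t' u').natAbs = (T t u).natAbs).card)) ∧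
              IsCluster T ∧ ∀ (t : Fin l) (u : Fin (pp t)), (T t u).natAbs ≠ 0)).card : ℝ))
      (fun n : ℕ => (bn n : ℝ) ^ (((∑ t : Fin l, (pp t : ℝ)) - (l : ℝ)) / 2)) :=
  cluster_count_lemma_general bn hbinf l hl pp

end RTM
end
end

section
/- Let H_n = P_n T_n be the Hankel band matrix associated to the Toeplitz band matrix T_n = (η_{ij} a_{i-j})_{i,j=1}^n with bandwidth b_n and real entries a_{-n+1},…,a_{n-1}, where P_n = (δ_{i-1,n-j})_{i,j=1}^n. Then for even p, tr(H_n^p) = Σ_{i=1}^n Σ_{j_1,…,j_p=-b_n}^{b_n} (∏_{l=1}^p a_{j_l}) (∏_{l=1}^p χ_{[1,n]}(i − Σ_{q=1}^l (−1)^q j_q)) δ_{0, Σ_{q=1}^p (−1)^q j_q}; and for odd p, tr(H_n^p) = Σ_{i=1}^n Σ_{j_1,…,j_p=-b_n}^{b_n} (∏_{l=1}^p a_{j_l}) (∏_{l=1}^p χ_{[1,n]}(i − Σ_{q=1}^l (−1)^q j_q)) δ_{2i−1−n, Σ_{q=1}^p (−1)^q j_q}. -/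
open MeasureTheory Finset Filter ProbabilityTheory Topology
open scoped Classical Topology

noncomputable section

namespace RTM

/-- The "backward identity" permutation matrix `P_n = (δ_{i-1,n-j})_{i,j=1}^n`. -/
def backId (n : ℕ) : Matrix (Fin n) (Fin n) ℝ :=
  Matrix.of fun i j => if (i : ℕ) + (j : ℕ) + 1 = n then 1 else 0

/-!
Index `H_n` from 1: `(H_n)_{m k} = a_j` exactly when `m + k + j = n + 1` and `|j| ≤ b_n`.
A term of `tr H_n^p` is therefore a choice of `i = m_0` and `j_1, …, j_p`, which determine the
walk `m_l = n + 1 - m_{l-1} - j_l`. Solving this recursion gives `m_l = i - s_l` for even `l`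
and `m_l = n + 1 - (i - s_l)` for odd `l`, where `s_l = ∑_{q ≤ l} (-1)^q j_q`. The reflection
`x ↦ n + 1 - x` preserves `[1, n]`, so the walk stays in `[1, n]` iff every `i - s_l` does, and
it closes up (`m_p = i`) iff `s_p = 0` for even `p` and `s_p = 2i - 1 - n` for odd `p`.
-/

lemma backId_eq_toMatrix_revPerm (n : ℕ) :
    backId n = (Fin.revPerm : Equiv.Perm (Fin n)).toPEquiv.toMatrix := by
  ext i j
  simp only [backId, Matrix.of_apply, PEquiv.toMatrix_apply, Equiv.toPEquiv_apply,
    Option.mem_def, Option.some.injEq, Fin.revPerm_apply, Fin.ext_iff, Fin.val_rev]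
  congr 1
  apply propext
  omega

lemma backId_mul_apply {n : ℕ} (M : Matrix (Fin n) (Fin n) ℝ) (i j : Fin n) :
    (backId n * M) i j = M i.rev j := by
  rw [backId_eq_toMatrix_revPerm, PEquiv.toMatrix_toPEquiv_mul]
  rfl

lemma hankelBand_apply {n : ℕ} (bn : ℕ) (a : ℤ → ℝ) (m k : Fin n) :
    (backId n * toeplitzBand n bn a) m k =
      ∑ j ∈ Icc (-(bn : ℤ)) bn,
        a j * if (n : ℤ) + 1 - ((m : ℕ) + 1) - j = (k : ℕ) + 1 then 1 else 0 := by
  have hd : (((m.rev : ℕ) : ℤ) - (k : ℕ)) = (n : ℤ) - 1 - (m : ℕ) - (k : ℕ) := by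
    rw [Fin.val_rev]; omega
  have hcond : ∀ j : ℤ, ((n : ℤ) + 1 - ((m : ℕ) + 1) - j = (k : ℕ) + 1) ↔
      ((n : ℤ) - 1 - (m : ℕ) - (k : ℕ) = j) := fun j => by omega
  simp only [backId_mul_apply, toeplitzBand, Matrix.of_apply, hd, hcond, mul_ite, mul_one,
    mul_zero, sum_ite_eq, mem_Icc, abs_le]

def chiIcc (n : ℕ) (x : ℤ) : ℝ := if 1 ≤ x ∧ x ≤ (n : ℤ) then 1 else 0

lemma chiIcc_of_mem {n : ℕ} {x : ℤ} (h : 1 ≤ x ∧ x ≤ (n : ℤ)) : chiIcc n x = 1 :=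
  if_pos h

lemma chiIcc_reflect (n : ℕ) (x : ℤ) : chiIcc n (n + 1 - x) = chiIcc n x := by
  unfold chiIcc
  congr 1
  apply propext
  omega

lemma chiIcc_mul_self (n : ℕ) (x : ℤ) : chiIcc n x * chiIcc n x = chiIcc n x := by
  unfold chiIcc
  split_ifs <;> norm_num

lemma Fin.sum_univ_eq_sum_Icc_int {M : Type*} [AddCommMonoid M] {n : ℕ} (f : ℤ → M) :
    ∑ i : Fin n, f ((i : ℕ) + 1) = ∑ I ∈ Icc (1 : ℤ) n, f I := by
  refine (sum_nbij (fun i : Fin n => ((i : ℕ) : ℤ) + 1) ?_ ?_ ?_ fun _ _ => rfl)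
  · intro i _
    simp only [mem_Icc]
    omega
  · intro i _ j _ h
    simp only at h
    ext
    omega
  · intro I hI
    simp only [coe_Icc, Set.mem_Icc] at hI
    exact ⟨⟨(I - 1).toNat, by omega⟩, mem_coe.mpr (mem_univ _), by simp only; omega⟩

lemma sum_fin_ite_eq_mul {n : ℕ} (E : ℤ) (g : ℤ → ℝ) :
    ∑ m : Fin n, (if E = (m : ℕ) + 1 then 1 else 0) * g ((m : ℕ) + 1) = chiIcc n E * g E := by
  rw [Fin.sum_univ_eq_sum_Icc_int fun M => (if E = M then 1 else 0) * g M]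
  simp only [ite_mul, one_mul, zero_mul, sum_ite_eq, mem_Icc, chiIcc]

lemma Fintype.sum_piFinset_succ_eq_sum_snoc {M α : Type*} [AddCommMonoid M] {p : ℕ}
    (s : Finset α) (f : (Fin (p + 1) → α) → M) :
    ∑ J ∈ Fintype.piFinset (fun _ : Fin (p + 1) => s), f J =
      ∑ J ∈ Fintype.piFinset (fun _ : Fin p => s), ∑ j ∈ s, f (Fin.snoc J j) := by
  have h := filter_piFinset_eq_map_snocEquiv (fun _ : Fin (p + 1) => s) (fun _ => True)
  simp only [filter_true] at h
  rw [h, sum_map, sum_product_right]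
  rfl

/-- `s_c = ∑_{q=1}^{c} (-1)^q j_q`, where `J u = j_{u+1}`. -/
def altPartialSum {p : ℕ} (J : Fin p → ℤ) (c : ℕ) : ℤ :=
  ∑ u ∈ univ.filter (fun u : Fin p => (u : ℕ) < c), (-1) ^ ((u : ℕ) + 1) * J u

lemma altPartialSum_self {p : ℕ} (J : Fin p → ℤ) :
    altPartialSum J p = ∑ u : Fin p, (-1) ^ ((u : ℕ) + 1) * J u := by
  rw [altPartialSum, filter_true_of_mem fun u _ => u.isLt]

lemma altPartialSum_snoc_of_le {p c : ℕ} (J : Fin p → ℤ) (j : ℤ) (hc : c ≤ p) :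
    altPartialSum (Fin.snoc J j : Fin (p + 1) → ℤ) c = altPartialSum J c := by
  rw [altPartialSum, altPartialSum, sum_filter, sum_filter, Fin.sum_univ_castSucc]
  simp only [Fin.snoc_castSucc, Fin.val_castSucc, Fin.snoc_last, Fin.val_last]
  rw [if_neg (by omega), add_zero]

lemma altPartialSum_snoc_self {p : ℕ} (J : Fin p → ℤ) (j : ℤ) :
    altPartialSum (Fin.snoc J j : Fin (p + 1) → ℤ) (p + 1) =
      altPartialSum J p + (-1) ^ (p + 1) * j := by
  rw [altPartialSum_self, Fin.sum_univ_castSucc, altPartialSum_self]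
  simp only [Fin.snoc_castSucc, Fin.val_castSucc, Fin.snoc_last, Fin.val_last]

/-- The endpoint `m_p`, in closed form, of the walk `m_0 = I`, `m_l = n + 1 - m_{l-1} - J (l-1)`. -/
def hankelWalkEnd (n : ℕ) (I : ℤ) {p : ℕ} (J : Fin p → ℤ) : ℤ :=
  if Even p then I - altPartialSum J p else n + 1 - (I - altPartialSum J p)

lemma hankelWalkEnd_snoc (n : ℕ) (I : ℤ) {p : ℕ} (J : Fin p → ℤ) (j : ℤ) :
    hankelWalkEnd n I (Fin.snoc J j : Fin (p + 1) → ℤ) = n + 1 - hankelWalkEnd n I J - j := by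
  rcases Nat.even_or_odd p with hp | hp
  · simp only [hankelWalkEnd, altPartialSum_snoc_self, hp, hp.add_one.neg_one_pow,
      Nat.not_even_iff_odd.mpr hp.add_one, if_true, if_false]
    ring
  · simp only [hankelWalkEnd, altPartialSum_snoc_self, hp.add_one, hp.add_one.neg_one_pow,
      Nat.not_even_iff_odd.mpr hp, if_true, if_false]
    ring

lemma chiIcc_hankelWalkEnd (n : ℕ) (I : ℤ) {p : ℕ} (J : Fin p → ℤ) :
    chiIcc n (hankelWalkEnd n I J) = chiIcc n (I - altPartialSum J p) := by
  unfold hankelWalkEnd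
  split_ifs
  · rfl
  · exact chiIcc_reflect n _

lemma hankelWalkEnd_eq_self_iff_of_even {n p : ℕ} (hp : Even p) (I : ℤ) (J : Fin p → ℤ) :
    hankelWalkEnd n I J = I ↔ altPartialSum J p = 0 := by
  rw [hankelWalkEnd, if_pos hp]
  omega

lemma hankelWalkEnd_eq_self_iff_of_odd {n p : ℕ} (hp : Odd p) (I : ℤ) (J : Fin p → ℤ) :
    hankelWalkEnd n I J = I ↔ altPartialSum J p = 2 * I - 1 - n := by
  rw [hankelWalkEnd, if_neg (Nat.not_even_iff_odd.mpr hp)]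
  omega

def hankelWalkWeight (n : ℕ) (a : ℤ → ℝ) (I : ℤ) {p : ℕ} (J : Fin p → ℤ) : ℝ :=
  (∏ l, a (J l)) * ∏ l ∈ range p, chiIcc n (I - altPartialSum J (l + 1))

lemma hankelWalkWeight_snoc (n : ℕ) (a : ℤ → ℝ) (I : ℤ) {p : ℕ} (J : Fin p → ℤ)
    (j : ℤ) :
    hankelWalkWeight n a I (Fin.snoc J j : Fin (p + 1) → ℤ) =
      hankelWalkWeight n a I J * a j *
        chiIcc n (hankelWalkEnd n I (Fin.snoc J j : Fin (p + 1) → ℤ)) := by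
  have hprefix :
      ∏ l ∈ range p, chiIcc n (I - altPartialSum (Fin.snoc J j : Fin (p + 1) → ℤ) (l + 1)) =
        ∏ l ∈ range p, chiIcc n (I - altPartialSum J (l + 1)) :=
    prod_congr rfl fun l hl => by rw [altPartialSum_snoc_of_le J j (mem_range.mp hl)]
  rw [chiIcc_hankelWalkEnd, hankelWalkWeight, hankelWalkWeight, Fin.prod_univ_castSucc,
    prod_range_succ, hprefix]
  simp only [Fin.snoc_castSucc, Fin.snoc_last]
  ring

lemma hankelWalkWeight_mul_chiIcc_hankelWalkEnd {n : ℕ} (a : ℤ → ℝ) {I : ℤ}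
    (hI : chiIcc n I = 1) {p : ℕ} (J : Fin p → ℤ) :
    hankelWalkWeight n a I J * chiIcc n (hankelWalkEnd n I J) = hankelWalkWeight n a I J := by
  cases p with
  | zero => simp [hankelWalkEnd, altPartialSum, hI]
  | succ q =>
    rw [chiIcc_hankelWalkEnd, hankelWalkWeight, prod_range_succ, mul_assoc, mul_assoc,
      chiIcc_mul_self]

theorem hankelBand_pow_apply {n : ℕ} (bn : ℕ) (a : ℤ → ℝ) (p : ℕ) (i k : Fin n) :
    ((backId n * toeplitzBand n bn a) ^ p) i k =
      ∑ J ∈ Fintype.piFinset fun _ : Fin p => Icc (-(bn : ℤ)) bn,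
        hankelWalkWeight n a ((i : ℕ) + 1) J *
          if hankelWalkEnd n ((i : ℕ) + 1) J = (k : ℕ) + 1 then 1 else 0 := by
  induction p generalizing k with
  | zero =>
    simp [Matrix.one_apply, hankelWalkWeight, hankelWalkEnd, altPartialSum, Fin.ext_iff]
  | succ p ih =>
    set I : ℤ := (i : ℕ) + 1
    set K : ℤ := (k : ℕ) + 1
    have hI : chiIcc n I = 1 := chiIcc_of_mem (by omega)
    have hK : chiIcc n K = 1 := chiIcc_of_mem (by omega)
    calc ((backId n * toeplitzBand n bn a) ^ (p + 1)) i k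
        = ∑ J ∈ Fintype.piFinset fun _ : Fin p => Icc (-(bn : ℤ)) bn,
            ∑ j ∈ Icc (-(bn : ℤ)) bn,
              hankelWalkWeight n a I J * a j * (chiIcc n (hankelWalkEnd n I J) *
                if (n : ℤ) + 1 - hankelWalkEnd n I J - j = K then 1 else 0) := by
          rw [pow_succ, Matrix.mul_apply]
          simp_rw [ih, hankelBand_apply, sum_mul_sum]
          rw [sum_comm]
          refine sum_congr rfl fun J _ => ?_
          rw [sum_comm]
          refine sum_congr rfl fun j _ => ?_
          rw [← sum_fin_ite_eq_mul (hankelWalkEnd n I J)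
            fun M => if (n : ℤ) + 1 - M - j = K then (1 : ℝ) else 0, mul_sum]
          exact sum_congr rfl fun m _ => by ring
      _ = ∑ J ∈ Fintype.piFinset fun _ : Fin p => Icc (-(bn : ℤ)) bn,
            ∑ j ∈ Icc (-(bn : ℤ)) bn,
              hankelWalkWeight n a I (Fin.snoc J j : Fin (p + 1) → ℤ) *
                if hankelWalkEnd n I (Fin.snoc J j : Fin (p + 1) → ℤ) = K then 1 else 0 := by
          refine sum_congr rfl fun J _ => sum_congr rfl fun j _ => ?_
          rw [hankelWalkWeight_snoc, hankelWalkEnd_snoc]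
          split_ifs with h
          · rw [h, hK]
            linear_combination a j * hankelWalkWeight_mul_chiIcc_hankelWalkEnd a hI J
          · ring
      _ = _ := (Fintype.sum_piFinset_succ_eq_sum_snoc (Icc (-(bn : ℤ)) bn) fun J =>
            hankelWalkWeight n a I J * if hankelWalkEnd n I J = K then 1 else 0).symm

theorem trace_hankelBand_pow (n bn : ℕ) (a : ℤ → ℝ) (p : ℕ) :
    Matrix.trace ((backId n * toeplitzBand n bn a) ^ p) =
      ∑ I ∈ Icc (1 : ℤ) n, ∑ J ∈ Fintype.piFinset fun _ : Fin p => Icc (-(bn : ℤ)) bn,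
        hankelWalkWeight n a I J * if hankelWalkEnd n I J = I then 1 else 0 := by
  simp only [Matrix.trace, Matrix.diag, hankelBand_pow_apply]
  exact Fin.sum_univ_eq_sum_Icc_int fun I =>
    ∑ J ∈ Fintype.piFinset fun _ : Fin p => Icc (-(bn : ℤ)) bn,
      hankelWalkWeight n a I J * if hankelWalkEnd n I J = I then 1 else 0

theorem trace_formula_hankel_band_general (n bn p : ℕ) (a : ℤ → ℝ) :
    (Even p →
      Matrix.trace ((backId n * toeplitzBand n bn a) ^ p) =
        ∑ i ∈ Finset.Icc (1 : ℤ) (n : ℤ),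
          ∑ J ∈ Fintype.piFinset fun _ : Fin p => Finset.Icc (-(bn : ℤ)) (bn : ℤ),
            (∏ l : Fin p, a (J l)) *
              (∏ l ∈ range p,
                if 1 ≤ i - (∑ u ∈ univ.filter (fun u : Fin p => (u : ℕ) < l + 1),
                      (-1 : ℤ) ^ ((u : ℕ) + 1) * J u) ∧
                    i - (∑ u ∈ univ.filter (fun u : Fin p => (u : ℕ) < l + 1),
                      (-1 : ℤ) ^ ((u : ℕ) + 1) * J u) ≤ (n : ℤ)
                  then (1 : ℝ) else 0) *
              (if (∑ u : Fin p, (-1 : ℤ) ^ ((u : ℕ) + 1) * J u) = 0 then (1 : ℝ) else 0)) ∧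
    (Odd p →
      Matrix.trace ((backId n * toeplitzBand n bn a) ^ p) =
        ∑ i ∈ Finset.Icc (1 : ℤ) (n : ℤ),
          ∑ J ∈ Fintype.piFinset fun _ : Fin p => Finset.Icc (-(bn : ℤ)) (bn : ℤ),
            (∏ l : Fin p, a (J l)) *
              (∏ l ∈ range p,
                if 1 ≤ i - (∑ u ∈ univ.filter (fun u : Fin p => (u : ℕ) < l + 1),
                      (-1 : ℤ) ^ ((u : ℕ) + 1) * J u) ∧
                    i - (∑ u ∈ univ.filter (fun u : Fin p => (u : ℕ) < l + 1),
                      (-1 : ℤ) ^ ((u : ℕ) + 1) * J u) ≤ (n : ℤ)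
                  then (1 : ℝ) else 0) *
              (if (∑ u : Fin p, (-1 : ℤ) ^ ((u : ℕ) + 1) * J u) = 2 * i - 1 - n
                then (1 : ℝ) else 0)) := by
  rw [trace_hankelBand_pow]
  refine ⟨fun hp => ?_, fun hp => ?_⟩
  · simp only [hankelWalkEnd_eq_self_iff_of_even hp, altPartialSum_self]
    rfl
  · simp only [hankelWalkEnd_eq_self_iff_of_odd hp, altPartialSum_self]
    rfl

/-- Lemma 6.3, trace formula for Hankel band matrices `H_n = P_n T_n`. -/
theorem trace_formula_hankel_band (n bn p : ℕ) (hbn : bn < n) (a : ℤ → ℝ) :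
    (Even p →
      Matrix.trace ((backId n * toeplitzBand n bn a) ^ p) =
        ∑ i ∈ Finset.Icc (1 : ℤ) (n : ℤ),
          ∑ J ∈ Fintype.piFinset fun _ : Fin p => Finset.Icc (-(bn : ℤ)) (bn : ℤ),
            (∏ l : Fin p, a (J l)) *
              (∏ l ∈ range p,
                if 1 ≤ i - (∑ u ∈ univ.filter (fun u : Fin p => (u : ℕ) < l + 1),
                      (-1 : ℤ) ^ ((u : ℕ) + 1) * J u) ∧
                    i - (∑ u ∈ univ.filter (fun u : Fin p => (u : ℕ) < l + 1),
                      (-1 : ℤ) ^ ((u : ℕ) + 1) * J u) ≤ (n : ℤ)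
                  then (1 : ℝ) else 0) *
              (if (∑ u : Fin p, (-1 : ℤ) ^ ((u : ℕ) + 1) * J u) = 0 then (1 : ℝ) else 0)) ∧
    (Odd p →
      Matrix.trace ((backId n * toeplitzBand n bn a) ^ p) =
        ∑ i ∈ Finset.Icc (1 : ℤ) (n : ℤ),
          ∑ J ∈ Fintype.piFinset fun _ : Fin p => Finset.Icc (-(bn : ℤ)) (bn : ℤ),
            (∏ l : Fin p, a (J l)) *
              (∏ l ∈ range p,
                if 1 ≤ i - (∑ u ∈ univ.filter (fun u : Fin p => (u : ℕ) < l + 1),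
                      (-1 : ℤ) ^ ((u : ℕ) + 1) * J u) ∧
                    i - (∑ u ∈ univ.filter (fun u : Fin p => (u : ℕ) < l + 1),
                      (-1 : ℤ) ^ ((u : ℕ) + 1) * J u) ≤ (n : ℤ)
                  then (1 : ℝ) else 0) *
              (if (∑ u : Fin p, (-1 : ℤ) ^ ((u : ℕ) + 1) * J u) = 2 * i - 1 - n
                then (1 : ℝ) else 0)) :=
  trace_formula_hankel_band_general n bn p a

end RTM
end
end
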